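/- arXiv:2012.15309 — 2 statements merged into one kernel-verified Lean document; each statement's English description precedes it below -/
import Mathlib

section
/- For the pattern-rewriting system R = {21 → 12, 231 → 312}, the statistic Σ₁₂(π), the sum of all positions i with π(i+1) = π(i) + 1, is strictly increasing under each rewrite step; hence the rewrite relation →_R is terminating. -/
/-- One rewrite step of the pattern-rewriting system R = {21 → 12, 231 → 312}:
a consecutive factor b+1, b is replaced by b, b+1, or a consecutive factor
b+1, b+2, b is replaced by b+2, b, b+1. -/
def StepEQ1 (π π' : List ℕ) : Prop :=
  (∃ (l₁ l₂ : List ℕ) (b : ℕ),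
      π = l₁ ++ [b+1, b] ++ l₂ ∧ π' = l₁ ++ [b, b+1] ++ l₂) ∨
  (∃ (l₁ l₂ : List ℕ) (b : ℕ),
      π = l₁ ++ [b+1, b+2, b] ++ l₂ ∧ π' = l₁ ++ [b+2, b, b+1] ++ l₂)

/-- Σ₁₂(π): the sum of all (1-based) positions i with π(i+1) = π(i) + 1. -/
def Sigma12 (l : List ℕ) : ℕ :=
  ∑ i ∈ Finset.range l.length,
    if l.getD (i+1) 0 = l.getD i 0 + 1 then i + 1 else 0

/-!
Writing `succCount l` for the number of successions `l(i+1) = l(i) + 1`, prepending a letter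
`a` gives `Σ₁₂(a :: l) = Σ₁₂ l + succCount l + [l starts with a + 1]`: every succession of `l`
moves one place to the right. Hence it suffices to compare both statistics on the rewritten
factor together with the suffix, and to check that the letter just before the factor does not
form a succession with it; both follow from injectivity. On the factor, `21 → 12` creates a
succession and `231 → 312` moves one succession a place to the right. Since rewrites permute
letters and `Σ₁₂ π ≤ n²`, no infinite chain exists.
-/

def succCount (l : List ℕ) : ℕ :=
  ∑ i ∈ Finset.range l.length, if l.getD (i+1) 0 = l.getD i 0 + 1 then 1 else 0

theorem succCount_cons (a : ℕ) (l : List ℕ) :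
    succCount (a :: l) = succCount l + if l.getD 0 0 = a + 1 then 1 else 0 := by
  simp only [succCount, List.length_cons, Finset.sum_range_succ', List.getD_cons_succ,
    List.getD_cons_zero]

theorem sigma12_cons (a : ℕ) (l : List ℕ) :
    Sigma12 (a :: l) = Sigma12 l + succCount l + if l.getD 0 0 = a + 1 then 1 else 0 := by
  simp only [Sigma12, succCount, List.length_cons, Finset.sum_range_succ', List.getD_cons_succ,
    List.getD_cons_zero, zero_add, ← Finset.sum_add_distrib]
  congr 1
  refine Finset.sum_congr rfl fun i _ => ?_
  split_ifs <;> rfl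

theorem getD_zero_ne_of_not_mem {l : List ℕ} {x : ℕ} (hx : x + 1 ∉ l) :
    l.getD 0 0 ≠ x + 1 := by
  cases l <;> grind

theorem sigma12_append_lt_append {t t' : List ℕ} (hlt : Sigma12 t < Sigma12 t')
    (hle : succCount t ≤ succCount t') (l : List ℕ) (hl : ∀ a ∈ l, t.getD 0 0 ≠ a + 1) :
    Sigma12 (l ++ t) < Sigma12 (l ++ t') ∧ succCount (l ++ t) ≤ succCount (l ++ t') := by
  induction l with
  | nil => exact ⟨hlt, hle⟩
  | cons a l ih =>
    obtain ⟨ihlt, ihle⟩ := ih fun c hc => hl c (List.mem_cons_of_mem a hc)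
    have hjoin : (if (l ++ t).getD 0 0 = a + 1 then 1 else 0)
        ≤ if (l ++ t').getD 0 0 = a + 1 then 1 else 0 := by
      cases l with
      | nil =>
        rw [List.nil_append, if_neg (hl a (List.mem_singleton_self a))]
        exact Nat.zero_le _
      | cons c l => simp
    simp only [List.cons_append, sigma12_cons, succCount_cons]
    omega

theorem sigma12_lt_of_step {π π' : List ℕ} (hπ : π.Nodup) (h : StepEQ1 π π') :
    Sigma12 π < Sigma12 π' := by
  rcases h with ⟨l₁, l₂, b, rfl, rfl⟩ | ⟨l₁, l₂, b, rfl, rfl⟩ <;>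
    simp only [List.append_assoc] at hπ ⊢
  · obtain ⟨hb, hb1⟩ : b ∉ l₁ ∧ b + 1 ∉ l₂ := by
      simp only [List.nodup_append, List.nodup_cons, List.mem_cons] at hπ
      grind
    have := getD_zero_ne_of_not_mem hb1
    refine (sigma12_append_lt_append ?_ ?_ l₁ fun a ha => ?_).1
    all_goals simp only [List.cons_append, List.nil_append, sigma12_cons, succCount_cons,
      List.getD_cons_zero]
    · split_ifs <;> omega
    · split_ifs <;> omega
    · grind
  · obtain ⟨hb, hb1, hb2⟩ : b ∉ l₁ ∧ b + 1 ∉ l₂ ∧ b + 2 ∉ l₂ := by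
      simp only [List.nodup_append, List.nodup_cons, List.mem_cons] at hπ
      grind
    have := getD_zero_ne_of_not_mem hb1
    have := getD_zero_ne_of_not_mem hb2
    refine (sigma12_append_lt_append ?_ ?_ l₁ fun a ha => ?_).1
    all_goals simp only [List.cons_append, List.nil_append, sigma12_cons, succCount_cons,
      List.getD_cons_zero]
    · split_ifs <;> omega
    · split_ifs <;> omega
    · grind

theorem StepEQ1.perm {π π' : List ℕ} (h : StepEQ1 π π') : π.Perm π' := by
  rcases h with ⟨l₁, l₂, b, rfl, rfl⟩ | ⟨l₁, l₂, b, rfl, rfl⟩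
  · exact ((List.Perm.swap b (b+1) []).append_left l₁).append_right l₂
  · exact (((List.Perm.swap (b+2) (b+1) [b]).trans
      ((List.Perm.swap b (b+1) []).cons (b+2))).append_left l₁).append_right l₂

theorem sigma12_le_length_mul_length (l : List ℕ) : Sigma12 l ≤ l.length * l.length := by
  calc Sigma12 l ≤ ∑ _i ∈ Finset.range l.length, l.length :=
        Finset.sum_le_sum fun i hi => by
          rw [Finset.mem_range] at hi
          split_ifs <;> omega
    _ = l.length * l.length := by simp

/-- For R = {21 → 12, 231 → 312}, Σ₁₂ strictly increases under each rewrite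
step on permutations; hence the rewrite relation is terminating. -/
theorem stmt_10 :
    (∀ π π' : List ℕ, π.Nodup → StepEQ1 π π' → Sigma12 π < Sigma12 π') ∧
    (∀ f : ℕ → List ℕ, (f 0).Nodup → ¬ ∀ n, StepEQ1 (f n) (f (n+1))) := by
  refine ⟨fun π π' => sigma12_lt_of_step, fun f h0 hf => ?_⟩
  have hperm : ∀ n, (f 0).Perm (f n) := fun n => by
    induction n with
    | zero => exact List.Perm.refl _
    | succ n ih => exact ih.trans (hf n).perm
  have hmono : StrictMono (Sigma12 ∘ f) := strictMono_nat_of_lt_succ fun n =>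
    sigma12_lt_of_step ((hperm n).nodup h0) (hf n)
  obtain ⟨L, hL⟩ : ∃ L, (f 0).length = L := ⟨_, rfl⟩
  have hbound : Sigma12 (f (L * L + 1)) ≤ L * L := by
    simpa only [← (hperm _).length_eq, hL] using sigma12_le_length_mul_length (f (L * L + 1))
  exact (hmono.id_le _).not_gt (Nat.lt_succ_of_le hbound)
end

section
/- There is a bijection between S_n and pairs (σ, A) where σ is a 12-avoiding permutation (no i with σ(i+1) = σ(i)+1) of some length m ≤ n and A is a subset of {1,...,n} of size n - m compatible with the run decomposition; concretely, the map sending π to (the standardization of the sequence of first elements of its maximal consecutive-ascending runs, the set of all non-first elements of runs) is injective, and the number of occurrences of the Hertzsprung pattern 12 in π equals |A|. -/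
/-!
A permutation `π` of `{1, …, n}` is recovered from its run data by reading it from left to right:
the entry after `x` is `x + 1` exactly when `x + 1` is a non-first element of a run, and otherwise
it is the next run first. The run firsts themselves are recovered from their standardization, since
their value set is the complement of the non-firsts.

The standardized run firsts avoid `12`: if `u < v` are consecutive run firsts and the run of `u`
ends at `e`, then `v ≠ e + 1` because `v` starts a run, and `v` is not one of `u, …, e`, so
`e + 1 < v`. Hence `e + 1` is an entry of `π` that does not follow `e`, i.e. a run first strictly
between `u` and `v`.
-/

/-- The (1-based values of the) first elements of the maximal
consecutive-ascending runs of π, in position order: the entry at index j is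
kept iff it does not continue the previous entry by +1. -/
def runFirsts (π : List ℕ) : List ℕ :=
  (List.range π.length).filterMap fun j =>
    if j = 0 ∨ π.getD j 0 ≠ π.getD (j-1) 0 + 1 then some (π.getD j 0) else none

/-- The non-first elements of the maximal consecutive-ascending runs of π:
entries that continue the previous entry by +1. -/
def runNonFirsts (π : List ℕ) : List ℕ :=
  (List.range π.length).filterMap fun j =>
    if j ≠ 0 ∧ π.getD j 0 = π.getD (j-1) 0 + 1 then some (π.getD j 0) else none

/-- Standardization of a list of distinct naturals: the j-th smallest letter is
replaced by j. -/
def stdize (l : List ℕ) : List ℕ :=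
  l.map fun x => (l.filter (fun y => y ≤ x)).length

/-- A list avoids the Hertzsprung pattern 12 if no entry is followed by its
successor. -/
def Avoids12 (l : List ℕ) : Prop :=
  ∀ i < l.length, l.getD (i+1) 0 ≠ l.getD i 0 + 1

/-- The number of occurrences of the Hertzsprung pattern 12 in π. -/
def occ12 (π : List ℕ) : ℕ :=
  ((List.range π.length).filter
    (fun i => π.getD (i+1) 0 = π.getD i 0 + 1)).length

open List

lemma List.Nodup.eq_of_mem_zip_cons {α : Type*} {p x y z : α} {l : List α} (h : (p :: l).Nodup)
    (hy : (x, y) ∈ (p :: l).zip l) (hz : (x, z) ∈ (p :: l).zip l) : y = z := by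
  induction l generalizing p with
  | nil => simp at hy
  | cons b t ih =>
    have hp : p ∉ b :: t := (nodup_cons.1 h).1
    simp only [zip_cons_cons, mem_cons, Prod.mk.injEq] at hy hz
    rcases hy with ⟨rfl, rfl⟩ | hy <;> rcases hz with ⟨hx, rfl⟩ | hz
    · rfl
    · exact absurd (of_mem_zip hz).1 hp
    · exact absurd (hx ▸ (of_mem_zip hy).1) hp
    · exact ih (nodup_cons.1 h).2 hy hz

def stdRank (l : List ℕ) (x : ℕ) : ℕ := l.countP (· ≤ x)

lemma stdize_eq_map_stdRank (l : List ℕ) : stdize l = l.map (stdRank l) := by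
  simp [stdize, stdRank, countP_eq_length_filter]

lemma stdRank_mono (l : List ℕ) : Monotone (stdRank l) := fun _ _ hxy =>
  countP_mono_left fun _ _ h => by simp only [decide_eq_true_eq] at h ⊢; omega

lemma stdRank_lt_stdRank {l : List ℕ} {x y : ℕ} (hxy : x < y) (hy : y ∈ l) :
    stdRank l x < stdRank l y := by
  induction l with
  | nil => simp at hy
  | cons a t ih =>
    have hle := stdRank_mono t hxy.le
    simp only [stdRank, countP_cons, decide_eq_true_eq] at hle ih ⊢
    rcases mem_cons.1 hy with rfl | hy
    · split_ifs <;> omega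
    · have := ih hy
      split_ifs <;> omega

lemma eq_of_stdRank_eq {l : List ℕ} {x y : ℕ} (hx : x ∈ l) (hy : y ∈ l)
    (h : stdRank l x = stdRank l y) : x = y := by
  rcases lt_trichotomy x y with hxy | rfl | hxy
  · exact absurd h (stdRank_lt_stdRank hxy hy).ne
  · rfl
  · exact absurd h (stdRank_lt_stdRank hxy hx).ne'

lemma List.Perm.eq_of_stdize_eq {l l' : List ℕ} (hp : l ~ l') (hs : stdize l = stdize l') :
    l = l' := by
  have hrank : stdRank l' = stdRank l := funext fun x => (hp.countP_eq _).symm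
  rw [stdize_eq_map_stdRank, stdize_eq_map_stdRank, hrank] at hs
  refine ext_getElem hp.length_eq fun i hi hi' => eq_of_stdRank_eq (getElem_mem _)
    (hp.symm.subset (getElem_mem _)) ?_
  have := getElem_of_eq hs (by simpa using hi)
  rwa [getElem_map, getElem_map] at this

lemma avoids12_of_isChain {l : List ℕ} (h : l.IsChain fun a b => b ≠ a + 1) : Avoids12 l := by
  intro i hi
  rcases lt_or_ge (i + 1) l.length with h1 | h1
  · rw [getD_eq_getElem _ _ h1, getD_eq_getElem _ _ hi]
    exact isChain_iff_getElem.1 h i h1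
  · rw [getD_eq_default _ _ h1]
    omega

lemma avoids12_stdize_of_isChain {l : List ℕ}
    (h : l.IsChain fun u v => u < v → ∃ y ∈ l, u < y ∧ y < v) : Avoids12 (stdize l) := by
  rw [stdize_eq_map_stdRank]
  refine avoids12_of_isChain ((isChain_map _).2 (h.imp_of_mem_imp fun u v _ hv huv => ?_))
  rcases lt_or_ge u v with huv' | hvu
  · obtain ⟨y, hy, huy, hyv⟩ := huv huv'
    have := stdRank_lt_stdRank huy hy
    have := stdRank_lt_stdRank hyv hv
    omega
  · have := stdRank_mono l hvu
    omega

def runFirstsAfter (p : ℕ) (l : List ℕ) : List ℕ :=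
  (((p :: l).zip l).filter fun xy => xy.2 ≠ xy.1 + 1).map Prod.snd

def runNonFirstsAfter (p : ℕ) (l : List ℕ) : List ℕ :=
  (((p :: l).zip l).filter fun xy => xy.2 = xy.1 + 1).map Prod.snd

lemma map_range_getD_eq_zip (p : ℕ) (l : List ℕ) :
    (range l.length).map (fun i => ((p :: l).getD i 0, l.getD i 0)) = (p :: l).zip l := by
  refine ext_getElem (by simp) fun i hi _ => ?_
  simp only [length_map, length_range] at hi
  simp [hi, getElem?_eq_getElem (show i < (p :: l).length by simp; omega)]

lemma runFirsts_nil : runFirsts [] = [] := rfl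

lemma runFirsts_cons (a : ℕ) (l : List ℕ) : runFirsts (a :: l) = a :: runFirstsAfter a l := by
  rw [runFirstsAfter, ← filterMap_eq_map, filterMap_filter, ← map_range_getD_eq_zip,
    filterMap_map, runFirsts, length_cons, range_succ_eq_map, filterMap_cons, filterMap_map]
  simp

lemma runNonFirsts_cons (a : ℕ) (l : List ℕ) :
    runNonFirsts (a :: l) = runNonFirstsAfter a l := by
  rw [runNonFirstsAfter, ← filterMap_eq_map, filterMap_filter, ← map_range_getD_eq_zip,
    filterMap_map, runNonFirsts, length_cons, range_succ_eq_map, filterMap_cons, filterMap_map]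
  simp

lemma occ12_cons (a : ℕ) (l : List ℕ) : occ12 (a :: l) = (runNonFirstsAfter a l).length := by
  rw [runNonFirstsAfter, length_map, ← countP_eq_length_filter, ← map_range_getD_eq_zip,
    countP_map, occ12, length_cons, range_succ, filter_append, length_append,
    ← countP_eq_length_filter]
  simp [Function.comp_def]

lemma runFirstsAfter_cons (p b : ℕ) (t : List ℕ) :
    runFirstsAfter p (b :: t) =
      if b = p + 1 then runFirstsAfter b t else b :: runFirstsAfter b t := by
  by_cases h : b = p + 1 <;> simp [runFirstsAfter, h]

lemma runNonFirstsAfter_cons (p b : ℕ) (t : List ℕ) :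
    runNonFirstsAfter p (b :: t) = if b = p + 1 then b :: runNonFirstsAfter b t
      else runNonFirstsAfter b t := by
  by_cases h : b = p + 1 <;> simp [runNonFirstsAfter, h]

lemma mem_runNonFirstsAfter {p y : ℕ} {l : List ℕ} :
    y ∈ runNonFirstsAfter p l ↔ ∃ x, (x, y) ∈ (p :: l).zip l ∧ y = x + 1 := by
  simp [runNonFirstsAfter]

lemma runFirstsAfter_append_runNonFirstsAfter_perm (p : ℕ) (l : List ℕ) :
    runFirstsAfter p l ++ runNonFirstsAfter p l ~ l := by
  have h := ((filter_append_perm (fun xy : ℕ × ℕ => decide (xy.2 = xy.1 + 1))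
    ((p :: l).zip l)).map Prod.snd)
  rw [map_append, map_snd_zip (by simp)] at h
  simpa [runFirstsAfter, runNonFirstsAfter] using perm_append_comm.trans h

lemma runFirsts_append_runNonFirsts_perm (π : List ℕ) :
    runFirsts π ++ runNonFirsts π ~ π := by
  cases π with
  | nil => rfl
  | cons a l =>
    rw [runFirsts_cons, runNonFirsts_cons]
    exact (runFirstsAfter_append_runNonFirstsAfter_perm a l).cons a

lemma occ12_eq_length_runNonFirsts (π : List ℕ) : occ12 π = (runNonFirsts π).length := by
  cases π with
  | nil => rfl
  | cons a l => rw [occ12_cons, runNonFirsts_cons]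

lemma head?_eq_of_nodup {p : ℕ} {l : List ℕ} (h : (p :: l).Nodup) :
    l.head? = if p + 1 ∈ runNonFirstsAfter p l then some (p + 1)
      else (runFirstsAfter p l).head? := by
  cases l with
  | nil => simp [runFirstsAfter, runNonFirstsAfter]
  | cons b t =>
    by_cases hb : b = p + 1
    · simp [runNonFirstsAfter_cons, hb]
    · have : p + 1 ∉ runNonFirstsAfter p (b :: t) := by
        rw [mem_runNonFirstsAfter]
        rintro ⟨x, hx, hxp⟩
        obtain rfl : x = p := by omega
        exact hb (h.eq_of_mem_zip_cons (by simp) hx)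
      simp [runFirstsAfter_cons, hb, this]

lemma runNonFirstsAfter_subset (p : ℕ) (l : List ℕ) : runNonFirstsAfter p l ⊆ l := by
  intro y hy
  obtain ⟨x, hx, -⟩ := mem_runNonFirstsAfter.1 hy
  exact (of_mem_zip hx).2

lemma head?_eq_of_runFirstsAfter_eq {p : ℕ} {l l' : List ℕ} (h : (p :: l).Nodup)
    (h' : (p :: l').Nodup) (hF : runFirstsAfter p l = runFirstsAfter p l')
    (hA : ∀ x, x ∈ runNonFirstsAfter p l ↔ x ∈ runNonFirstsAfter p l') :
    l.head? = l'.head? := by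
  simp only [head?_eq_of_nodup h, head?_eq_of_nodup h', hF, hA]

lemma eq_of_runFirstsAfter_eq {p : ℕ} {l l' : List ℕ} (h : (p :: l).Nodup)
    (h' : (p :: l').Nodup) (hF : runFirstsAfter p l = runFirstsAfter p l')
    (hA : ∀ x, x ∈ runNonFirstsAfter p l ↔ x ∈ runNonFirstsAfter p l') : l = l' := by
  induction l generalizing p l' with
  | nil =>
    have hhead := head?_eq_of_runFirstsAfter_eq h h' hF hA
    cases l' <;> simp_all
  | cons b t ih =>
    have hhead := head?_eq_of_runFirstsAfter_eq h h' hF hA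
    obtain ⟨t', rfl⟩ : ∃ t', l' = b :: t' := by cases l' <;> simp_all
    have hbt : b ∉ runNonFirstsAfter b t :=
      fun hb => (nodup_cons.1 (nodup_cons.1 h).2).1 (runNonFirstsAfter_subset b t hb)
    have hbt' : b ∉ runNonFirstsAfter b t' :=
      fun hb => (nodup_cons.1 (nodup_cons.1 h').2).1 (runNonFirstsAfter_subset b t' hb)
    have hF' : runFirstsAfter b t = runFirstsAfter b t' := by
      by_cases hb : b = p + 1 <;> simpa [runFirstsAfter_cons, hb] using hF
    have hA' : ∀ x, x ∈ runNonFirstsAfter b t ↔ x ∈ runNonFirstsAfter b t' := fun x => by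
      by_cases hb : b = p + 1
      · by_cases hx : x = b
        · simp only [hx, hbt, hbt']
        · simpa [runNonFirstsAfter_cons, if_pos hb, hx] using hA x
      · simpa [runNonFirstsAfter_cons, hb] using hA x
    congr 1
    exact ih (nodup_cons.1 h).2 (nodup_cons.1 h').2 hF' hA'

lemma eq_of_runFirsts_eq {π π' : List ℕ} (hπ : π.Nodup) (hπ' : π'.Nodup)
    (hF : runFirsts π = runFirsts π')
    (hA : ∀ x, x ∈ runNonFirsts π ↔ x ∈ runNonFirsts π') :
    π = π' := by
  cases π <;> cases π'
  · rfl
  · simp [runFirsts_cons, runFirsts_nil] at hF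
  · simp [runFirsts_cons, runFirsts_nil] at hF
  · rw [runFirsts_cons, runFirsts_cons, cons.injEq] at hF
    obtain ⟨rfl, hF⟩ := hF
    simp only [runNonFirsts_cons] at hA
    rw [eq_of_runFirstsAfter_eq hπ hπ' hF hA]

lemma mem_runFirsts_iff {π : List ℕ} (hπ : π.Nodup) {x : ℕ} :
    x ∈ runFirsts π ↔ x ∈ π ∧ x ∉ runNonFirsts π := by
  have hperm := runFirsts_append_runNonFirsts_perm π
  have hdisj := disjoint_of_nodup_append (hperm.nodup_iff.2 hπ)
  rw [← hperm.mem_iff, mem_append]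
  exact ⟨fun hx => ⟨Or.inl hx, fun hx' => hdisj hx hx'⟩,
    fun ⟨hx, hx'⟩ => hx.resolve_right hx'⟩

lemma List.Nodup.runFirsts {π : List ℕ} (hπ : π.Nodup) : (runFirsts π).Nodup :=
  ((runFirsts_append_runNonFirsts_perm π).nodup_iff.2 hπ).of_append_left

/-- `f` is the first entry of the run being read and `e` its latest entry, so the values
`f, …, e` are already used up (`hgap`). -/
lemma isChain_cons_runFirstsAfter (Q : ℕ → Prop) {f e : ℕ} {l : List ℕ}
    (hQ : ∀ x v, (x, v) ∈ (e :: l).zip l → x + 1 < v → Q (x + 1))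
    (hfe : f ≤ e) (hl : l.Nodup) (hgap : ∀ v ∈ l, v < f ∨ e < v) :
    (f :: runFirstsAfter e l).IsChain fun u v => u < v → ∃ y, Q y ∧ u < y ∧ y < v := by
  induction l generalizing f e with
  | nil => exact isChain_singleton f
  | cons b t ih =>
    have hQ' : ∀ x v, (x, v) ∈ (b :: t).zip t → x + 1 < v → Q (x + 1) :=
      fun x v hxv => hQ x v (mem_cons_of_mem _ hxv)
    have hbt : b ∉ t := (nodup_cons.1 hl).1
    rw [runFirstsAfter_cons]
    split_ifs with hb
    · refine ih hQ' (by omega) (nodup_cons.1 hl).2 fun v hv => ?_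
      have := hgap v (mem_cons_of_mem _ hv)
      have : v ≠ b := fun h => hbt (h ▸ hv)
      omega
    · refine isChain_cons_cons.2
        ⟨fun hfb => ?_, ih hQ' le_rfl (nodup_cons.1 hl).2 fun v hv => ?_⟩
      · have := hgap b mem_cons_self
        exact ⟨e + 1, hQ e b mem_cons_self (by omega), by omega, by omega⟩
      · have : v ≠ b := fun h => hbt (h ▸ hv)
        omega

lemma succ_mem_runFirsts {a x v : ℕ} {l : List ℕ} (hπ : (a :: l).Nodup)
    (hxv : (x, v) ∈ (a :: l).zip l) (hv : v ≠ x + 1) (hx : x + 1 ∈ a :: l) :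
    x + 1 ∈ runFirsts (a :: l) := by
  refine (mem_runFirsts_iff hπ).2 ⟨hx, fun hx' => ?_⟩
  obtain ⟨y, hy, hyx⟩ := mem_runNonFirstsAfter.1 (runNonFirsts_cons a l ▸ hx')
  obtain rfl : y = x := by omega
  exact hv (hπ.eq_of_mem_zip_cons hxv hy)

lemma isChain_runFirsts {π : List ℕ} (hπ : π.Nodup) (hconv : {x | x ∈ π}.OrdConnected) :
    (runFirsts π).IsChain fun u v => u < v → ∃ y ∈ runFirsts π, u < y ∧ y < v := by
  cases π with
  | nil => exact isChain_nil
  | cons a l =>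
    have hgap : ∀ v ∈ l, v < a ∨ a < v := fun v hv => by
      have : v ≠ a := fun h => (nodup_cons.1 hπ).1 (h ▸ hv)
      omega
    convert isChain_cons_runFirstsAfter (· ∈ runFirsts (a :: l)) (fun x v hxv hxv' => ?_) le_rfl
      (nodup_cons.1 hπ).2 hgap using 1
    · exact runFirsts_cons a l
    · exact succ_mem_runFirsts hπ hxv (by omega) (hconv.out (of_mem_zip hxv).1
        (mem_cons_of_mem _ (of_mem_zip hxv).2) ⟨by omega, by omega⟩)

lemma avoids12_stdize_runFirsts {π : List ℕ} (hπ : π.Nodup)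
    (hconv : {x | x ∈ π}.OrdConnected) :
    Avoids12 (stdize (runFirsts π)) :=
  avoids12_stdize_of_isChain (isChain_runFirsts hπ hconv)

/-- The map π ↦ (σ, A), sending a permutation π of {1,...,n} to the
standardization σ of the first elements of its maximal consecutive-ascending
runs together with the set A of all non-first elements of the runs, is
injective; moreover σ is 12-avoiding of some length m ≤ n with |A| = n - m,
and the number of occurrences of the Hertzsprung pattern 12 in π equals |A|. -/
theorem stmt_18 (n : ℕ) :
    (∀ π π' : List ℕ, π.Perm (List.range' 1 n) → π'.Perm (List.range' 1 n) →
      stdize (runFirsts π) = stdize (runFirsts π') →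
      (runNonFirsts π).toFinset = (runNonFirsts π').toFinset → π = π') ∧
    (∀ π : List ℕ, π.Perm (List.range' 1 n) →
      Avoids12 (stdize (runFirsts π)) ∧
      (stdize (runFirsts π)).length ≤ n ∧
      (stdize (runFirsts π)).length + (runNonFirsts π).length = n ∧
      (runNonFirsts π).length = occ12 π) := by
  have hnodup : ∀ {π : List ℕ}, π.Perm (range' 1 n) → π.Nodup :=
    fun h => h.nodup_iff.2 nodup_range'
  refine ⟨fun π π' hπ hπ' hσ hA => ?_, fun π hπ => ?_⟩
  · have hA' : ∀ x, x ∈ runNonFirsts π ↔ x ∈ runNonFirsts π' := by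
      simpa [Finset.ext_iff] using hA
    have hF : runFirsts π ~ runFirsts π' :=
      (perm_ext_iff_of_nodup (hnodup hπ).runFirsts (hnodup hπ').runFirsts).2 fun x => by
        simp only [mem_runFirsts_iff (hnodup hπ), mem_runFirsts_iff (hnodup hπ'), hπ.mem_iff,
          hπ'.mem_iff, hA']
    exact eq_of_runFirsts_eq (hnodup hπ) (hnodup hπ') (hF.eq_of_stdize_eq hσ) hA'
  · have hlen := ((runFirsts_append_runNonFirsts_perm π).trans hπ).length_eq
    rw [length_append, length_range'] at hlen
    have hconv : {x | x ∈ π}.OrdConnected := by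
      convert Set.ordConnected_Ico (a := 1) (b := 1 + n)
      ext
      simp [hπ.mem_iff]
    refine ⟨avoids12_stdize_runFirsts (hnodup hπ) hconv, ?_, ?_,
      (occ12_eq_length_runNonFirsts π).symm⟩
    all_goals
      rw [stdize, length_map]
      omega
end
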